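/- Let X = {0,…,k} and μ ∈ P(X) with supp(μ) = X, and let c be a Lipschitz cost with pressure functional P. Consider F : ℝ^k → ℝ defined by F(v) = −∫_X φ_v dμ + P(c + φ_v), where φ_v(0) = 0 and φ_v(j) = v_j. Then there exist ε > 0 and ξ ∈ ℝ such that F(tv) ≥ tε + ξ for all v in the unit sphere S^{k−1} and all t > 0; consequently F attains a minimum on ℝ^k. -/

import Mathlib

open MeasureTheory Filter Topology

attribute [local instance] PiNat.dist

/-- The Bernoulli space `{1,...,d}^ℕ`, with the metric `dist z y = (1/2)^n` where `n`
is the first coordinate at which `z` and `y` differ (provided by `PiNat.dist`). -/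
abbrev W (d : ℕ) : Type := ℕ → Fin d

/-- The shift map `σ` on the Bernoulli space. -/
def shift {d : ℕ} (y : W d) : W d := fun n => y (n + 1)

/-- Prepend the symbol `a` to the sequence `y`, i.e. the point `a y` (a preimage of `y`
under the shift). -/
def cons {d : ℕ} (a : Fin d) (y : W d) : W d := fun n =>
  match n with
  | 0 => a
  | Nat.succ k => y k

variable {X : Type*} [Fintype X] [MeasurableSpace X] [TopologicalSpace X] {d : ℕ}

/-- `π ∈ Π(·,σ)`: a Borel probability on `X × Ω` whose `y`-marginal is `σ`-invariant. -/
def IsPlan (π : Measure (X × W d)) : Prop :=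
  IsProbabilityMeasure π ∧
    ∀ g : W d → ℝ, Continuous g → ∫ p, g (shift p.2) ∂π = ∫ p, g p.2 ∂π

/-- A cost `c` is normalized if `∑_{x ∈ X} ∑_{σ w = y} e^{c(x,w)} = 1` for every `y`. -/
def IsNormalized (c : X × W d → ℝ) : Prop :=
  ∀ y : W d, ∑ x : X, ∑ a : Fin d, Real.exp (c (x, cons a y)) = 1

/-- `π` is a fixed point of the dual transfer operator `L̂_c^*`, i.e. a Gibbs plan for `c`. -/
def GibbsFixed (c : X × W d → ℝ) (π : Measure (X × W d)) : Prop :=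
  ∀ u : X × W d → ℝ, Continuous u →
    ∫ p, u p ∂π =
      ∫ p, ∑ x : X, ∑ a : Fin d,
        Real.exp (c (x, cons a p.2)) * u (x, cons a p.2) ∂π

/-- `c` is a Lipschitz cost: Lipschitz in the `Ω` variable, uniformly in `x ∈ X`. -/
def LipCost (c : X × W d → ℝ) : Prop :=
  ∃ K : ℝ, ∀ (x : X) (y z : W d), |c (x, y) - c (x, z)| ≤ K * dist y z

/-- The entropy of a plan: `H(π) = inf { -∫ b dπ : b normalized }`. -/
noncomputable def Hent (π : Measure (X × W d)) : ℝ :=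
  sInf {r | ∃ b : X × W d → ℝ, LipCost b ∧ IsNormalized b ∧ r = -∫ p, b p ∂π}

/-- The pressure `P(c) = sup_{π ∈ Π(·,σ)} ∫ c dπ + H(π)`. -/
noncomputable def Pr (c : X × W d → ℝ) : ℝ :=
  sSup {r | ∃ π : Measure (X × W d), IsPlan π ∧ r = ∫ p, c p ∂π + Hent π}

/-- For `v ∈ ℝ^k`, the function `φ_v : {0,…,k} → ℝ` with `φ_v(0) = 0`, `φ_v(j) = v_j`. -/
def phiV {k : ℕ} (v : Fin k → ℝ) : Fin (k + 1) → ℝ := Fin.cases 0 v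

/-!
Testing the pressure against the Dirac plans at `(x, aaa…)` gives
`P(c + φ) ≥ min c + max φ`, hence `F(v) ≥ min c + (max φ_v - ∫ φ_v dμ)`. The bracket is
continuous and positively homogeneous in `v`, and it is positive for `v ≠ 0` because `μ`
charges every point while `φ_v` is not constant; by compactness of the unit sphere it is at
least `ε ‖v‖`. Thus `F` grows linearly, and since `P` is `1`-Lipschitz for the sup norm, `F` is
continuous and attains its minimum.
-/

section Pressure

variable {Y : Type*}

lemma continuous_of_abs_sub_le_mul_dist {f : W d → ℝ} {K : ℝ}
    (h : ∀ y z, |f y - f z| ≤ K * dist y z) : Continuous f := by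
  -- `PiNat.metricSpace` induces the product topology by definition
  let := PiNat.metricSpace (E := fun _ : ℕ => Fin d)
  refine (LipschitzWith.of_dist_le_mul (K := K.toNNReal) fun y z => ?_).continuous
  exact (h y z).trans (mul_le_mul_of_nonneg_right (Real.le_coe_toNNReal K) dist_nonneg)

lemma LipCost.continuous [TopologicalSpace Y] [DiscreteTopology Y] {c : Y × W d → ℝ}
    (hc : LipCost c) : Continuous c :=
  let ⟨_, hK⟩ := hc
  continuous_prod_of_discrete_left.2 fun x => continuous_of_abs_sub_le_mul_dist (hK x)

lemma isPlan_dirac_const [MeasurableSpace Y] [MeasurableSingletonClass Y] (x : Y) (a : Fin d) :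
    IsPlan (Measure.dirac (x, fun _ : ℕ => a)) :=
  ⟨inferInstance, fun g _ => by simp only [integral_dirac]; rfl⟩

lemma cons_apply_zero_shift (w : W d) : cons (w 0) (shift w) = w := by
  funext n; cases n <;> rfl

lemma IsNormalized.nonpos [Fintype Y] {b : Y × W d → ℝ} (hb : IsNormalized b) (p : Y × W d) :
    b p ≤ 0 := by
  obtain ⟨x, w⟩ := p
  have hterm : Real.exp (b (x, cons (w 0) (shift w))) ≤
      ∑ x', ∑ a : Fin d, Real.exp (b (x', cons a (shift w))) :=
    (Finset.single_le_sum (f := fun a => Real.exp (b (x, cons a (shift w))))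
      (fun _ _ => (Real.exp_pos _).le) (Finset.mem_univ (w 0))).trans
      (Finset.single_le_sum (f := fun x' => ∑ a : Fin d, Real.exp (b (x', cons a (shift w))))
        (fun _ _ => Finset.sum_nonneg fun _ _ => (Real.exp_pos _).le) (Finset.mem_univ x))
  rw [hb, cons_apply_zero_shift] at hterm
  exact Real.exp_le_one_iff.1 hterm

lemma Hent_nonneg [Fintype Y] [MeasurableSpace Y] (π : Measure (Y × W d)) : 0 ≤ Hent π := by
  refine Real.sInf_nonneg ?_
  rintro _ ⟨b, -, hb, rfl⟩
  exact neg_nonneg.2 (integral_nonpos hb.nonpos)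

lemma isNormalized_const_neg_log [Fintype Y] (hY : 0 < Fintype.card Y) (hd : 0 < d) :
    IsNormalized (fun _ : Y × W d => -Real.log (Fintype.card Y * d)) := by
  intro y
  have hpos : (0 : ℝ) < Fintype.card Y * d := by positivity
  simp only [Real.exp_neg, Real.exp_log hpos, Finset.sum_const, Finset.card_univ,
    Fintype.card_fin, nsmul_eq_mul]
  field_simp

lemma Hent_le_log [Fintype Y] [MeasurableSpace Y] (π : Measure (Y × W d))
    [IsProbabilityMeasure π] : Hent π ≤ Real.log (Fintype.card Y * d) := by
  obtain ⟨x, w⟩ := (nonempty_of_isProbabilityMeasure π).some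
  refine csInf_le ⟨0, ?_⟩ ⟨_, ⟨0, fun _ _ _ => by simp⟩,
    isNormalized_const_neg_log (Fintype.card_pos_iff.2 ⟨x⟩) (Fin.pos (w 0)), by simp⟩
  rintro _ ⟨b, -, hb, rfl⟩
  exact neg_nonneg.2 (integral_nonpos hb.nonpos)

lemma Continuous.integrable_of_compactSpace {Z : Type*} [TopologicalSpace Z] [CompactSpace Z]
    [MeasurableSpace Z] [OpensMeasurableSpace Z] {f : Z → ℝ} (hf : Continuous f)
    (μ : Measure Z) [IsFiniteMeasure μ] : Integrable f μ :=
  hf.integrable_of_hasCompactSupport (.of_compactSpace f)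

variable [Fintype Y] [MeasurableSpace Y] [TopologicalSpace Y] [OpensMeasurableSpace Y]
  {c : Y × W d → ℝ}

lemma le_Pr (hc : Continuous c) {π : Measure (Y × W d)} (hπ : IsPlan π) :
    ∫ p, c p ∂π + Hent π ≤ Pr c := by
  refine le_csSup ?_ ⟨π, hπ, rfl⟩
  obtain ⟨M, hM⟩ := (isCompact_range hc).bddAbove
  refine ⟨M + Real.log (Fintype.card Y * d), ?_⟩
  rintro _ ⟨ρ, ⟨hρ, -⟩, rfl⟩
  have hint : ∫ p, c p ∂ρ ≤ M := by
    simpa using integral_mono (hc.integrable_of_compactSpace ρ) (integrable_const M)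
      fun p => hM ⟨p, rfl⟩
  linarith [Hent_le_log ρ]

lemma apply_const_le_Pr [MeasurableSingletonClass Y] (hc : Continuous c) (x : Y) (a : Fin d) :
    c (x, fun _ => a) ≤ Pr c := by
  have h := le_Pr hc (isPlan_dirac_const x a)
  rw [integral_dirac] at h
  linarith [Hent_nonneg (Measure.dirac (x, fun _ : ℕ => a))]

lemma Pr_le_add [MeasurableSingletonClass Y] [Nonempty Y] (hd : 0 < d) {c' : Y × W d → ℝ}
    {M : ℝ} (hc : Continuous c) (hc' : Continuous c') (h : ∀ p, c p ≤ c' p + M) :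
    Pr c ≤ Pr c' + M := by
  refine csSup_le ⟨_, _, isPlan_dirac_const (Classical.arbitrary Y) ⟨0, hd⟩, rfl⟩ ?_
  rintro _ ⟨π, hπ, rfl⟩
  have := hπ.1
  have hint : ∫ p, c p ∂π ≤ ∫ p, c' p ∂π + M := by
    have hc'π := hc'.integrable_of_compactSpace π
    simpa [integral_add hc'π (integrable_const M)] using
      integral_mono (hc.integrable_of_compactSpace π) (hc'π.add (integrable_const M)) h
  linarith [le_Pr hc' hπ]

end Pressure

section Homogeneous

variable {E : Type*} [NormedAddCommGroup E]

lemma exists_pos_mul_norm_le_of_homogeneous [NormedSpace ℝ E] [ProperSpace E] {G : E → ℝ}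
    (hG : Continuous G) (hhom : ∀ t : ℝ, 0 ≤ t → ∀ v, G (t • v) = t * G v)
    (hpos : ∀ v ≠ 0, 0 < G v) : ∃ ε > 0, ∀ v, ε * ‖v‖ ≤ G v := by
  obtain ⟨ε, hε, hεG⟩ := (isCompact_sphere (0 : E) 1).exists_forall_le' hG.continuousOn
    fun v hv => hpos v (ne_zero_of_mem_sphere one_ne_zero ⟨v, hv⟩)
  refine ⟨ε, hε, fun v => ?_⟩
  rcases eq_or_ne v 0 with rfl | hv
  · have h0 : G 0 = 0 := by simpa using hhom 0 le_rfl 0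
    simp [h0]
  have hnorm : 0 < ‖v‖ := norm_pos_iff.2 hv
  have hu : ‖v‖⁻¹ • v ∈ Metric.sphere (0 : E) 1 := by
    simp [norm_smul, hnorm.ne']
  calc ε * ‖v‖ ≤ G (‖v‖⁻¹ • v) * ‖v‖ := by gcongr; exact hεG _ hu
    _ = G v := by
      rw [hhom _ (inv_nonneg.2 hnorm.le), mul_comm, ← mul_assoc, mul_inv_cancel₀ hnorm.ne',
        one_mul]

lemma tendsto_cocompact_atTop_of_mul_norm_add_le [ProperSpace E] {F : E → ℝ} {ε ξ : ℝ}
    (hε : 0 < ε) (h : ∀ v, ε * ‖v‖ + ξ ≤ F v) : Tendsto F (cocompact E) atTop :=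
  tendsto_atTop_mono h
    ((tendsto_norm_cocompact_atTop.const_mul_atTop hε).atTop_add tendsto_const_nhds)

end Homogeneous

lemma integral_lt_of_forall_le_of_lt {α : Type*} [MeasurableSpace α] {μ : Measure α}
    [IsProbabilityMeasure μ] {f : α → ℝ} {M : ℝ} (hf : Integrable f μ) (hle : ∀ x, f x ≤ M)
    {x₀ : α} (hlt : f x₀ < M) (hx₀ : 0 < μ {x₀}) : ∫ x, f x ∂μ < M := by
  have hgap : 0 < ∫ x, M - f x ∂μ := by
    refine (integral_pos_iff_support_of_nonneg (fun x => sub_nonneg.2 (hle x))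
      ((integrable_const M).sub hf)).2 (hx₀.trans_le (measure_mono ?_))
    simpa using (sub_pos.2 hlt).ne'
  rw [integral_sub (integrable_const M) hf] at hgap
  simpa using hgap

section PhiV

variable {k : ℕ}

@[simp]
lemma phiV_zero (v : Fin k → ℝ) : phiV v 0 = 0 := rfl

@[simp]
lemma phiV_succ (v : Fin k → ℝ) (i : Fin k) : phiV v i.succ = v i := rfl

lemma phiV_smul (t : ℝ) (v : Fin k → ℝ) : phiV (t • v) = t • phiV v := by
  funext x; cases x using Fin.cases <;> simp

lemma continuous_phiV : Continuous (phiV : (Fin k → ℝ) → Fin (k + 1) → ℝ) :=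
  continuous_pi fun x => by
    cases x using Fin.cases
    · simpa using continuous_const
    · simpa using continuous_apply _

lemma phiV_le_add_dist (u v : Fin k → ℝ) (x : Fin (k + 1)) :
    phiV u x ≤ phiV v x + dist u v := by
  cases x using Fin.cases with
  | zero => simp [dist_nonneg]
  | succ i =>
    have h : u i - v i ≤ dist u v :=
      (le_abs_self _).trans (Real.dist_eq (u i) (v i) ▸ dist_le_pi_dist u v i)
    simp only [phiV_succ]
    linarith

lemma Continuous.add_phiV_fst {c : Fin (k + 1) × W d → ℝ} (hc : Continuous c)
    (v : Fin k → ℝ) : Continuous fun p : Fin (k + 1) × W d => c p + phiV v p.1 :=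
  hc.add ((continuous_of_discreteTopology (f := phiV v)).comp continuous_fst)

lemma continuous_Pr_add_phiV (hd : 0 < d) {c : Fin (k + 1) × W d → ℝ} (hc : Continuous c) :
    Continuous fun v : Fin k → ℝ => Pr fun p => c p + phiV v p.1 := by
  refine (LipschitzWith.of_le_add fun u v => ?_).continuous
  exact Pr_le_add hd (hc.add_phiV_fst u) (hc.add_phiV_fst v) fun p => by
    linarith [phiV_le_add_dist u v p.1]

def maxPhiV (v : Fin k → ℝ) : ℝ := Finset.univ.sup' Finset.univ_nonempty (phiV v)

lemma phiV_le_maxPhiV (v : Fin k → ℝ) (x : Fin (k + 1)) : phiV v x ≤ maxPhiV v :=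
  Finset.le_sup' _ (Finset.mem_univ x)

lemma maxPhiV_smul {t : ℝ} (ht : 0 ≤ t) (v : Fin k → ℝ) :
    maxPhiV (t • v) = t * maxPhiV v := by
  simp only [maxPhiV, phiV_smul, Finset.mul₀_sup' ht]
  rfl

lemma continuous_maxPhiV : Continuous (maxPhiV : (Fin k → ℝ) → ℝ) :=
  Continuous.finset_sup'_apply _ fun x _ => (continuous_apply x).comp continuous_phiV

lemma exists_phiV_lt_maxPhiV {v : Fin k → ℝ} (hv : v ≠ 0) : ∃ x, phiV v x < maxPhiV v := by
  by_contra! h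
  have hconst : ∀ x, phiV v x = maxPhiV v := fun x => (phiV_le_maxPhiV v x).antisymm (h x)
  exact hv (funext fun i => by simpa [← hconst 0] using hconst i.succ)

variable {μ : Measure (Fin (k + 1))}

lemma integral_phiV_smul (t : ℝ) (v : Fin k → ℝ) :
    ∫ x, phiV (t • v) x ∂μ = t * ∫ x, phiV v x ∂μ := by
  simp only [phiV_smul, Pi.smul_apply, smul_eq_mul, integral_const_mul]

lemma continuous_integral_phiV [IsFiniteMeasure μ] :
    Continuous fun v : Fin k → ℝ => ∫ x, phiV v x ∂μ := by
  simp only [integral_fintype Integrable.of_finite, smul_eq_mul]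
  exact continuous_finsetSum _ fun x _ =>
    continuous_const.mul ((continuous_apply x).comp continuous_phiV)

lemma integral_phiV_lt_maxPhiV [IsProbabilityMeasure μ] (hfull : ∀ x, 0 < μ {x})
    {v : Fin k → ℝ} (hv : v ≠ 0) : ∫ x, phiV v x ∂μ < maxPhiV v :=
  let ⟨x, hx⟩ := exists_phiV_lt_maxPhiV hv
  integral_lt_of_forall_le_of_lt Integrable.of_finite (phiV_le_maxPhiV v) hx (hfull x)

end PhiV

/-- The function `F(v) = −∫ φ_v dμ + P(c + φ_v)` grows at least linearly along rays:
there are `ε > 0` and `ξ ∈ ℝ` with `F(tv) ≥ tε + ξ` for all unit vectors `v` and `t > 0`;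
consequently `F` attains a minimum on `ℝ^k`. -/
theorem F_coercive_and_attains_min
    {k : ℕ} {d : ℕ} (hd : 0 < d)
    (c : Fin (k + 1) × W d → ℝ) (hc : LipCost c)
    (μ : Measure (Fin (k + 1))) (hμ : IsProbabilityMeasure μ)
    (hfull : ∀ x : Fin (k + 1), 0 < μ {x}) :
    (∃ ε > (0 : ℝ), ∃ ξ : ℝ, ∀ v : Fin k → ℝ, ‖v‖ = 1 → ∀ t : ℝ, 0 < t →
        t * ε + ξ ≤
          -∫ x, phiV (t • v) x ∂μ + Pr (fun p => c p + phiV (t • v) p.1)) ∧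
      ∃ v₀ : Fin k → ℝ, ∀ v : Fin k → ℝ,
        -∫ x, phiV v₀ x ∂μ + Pr (fun p => c p + phiV v₀ p.1) ≤
          -∫ x, phiV v x ∂μ + Pr (fun p => c p + phiV v p.1) := by
  have hcont := hc.continuous
  obtain ⟨ξ, hξ⟩ := (isCompact_range hcont).bddBelow
  obtain ⟨ε, hε, hgap⟩ := exists_pos_mul_norm_le_of_homogeneous
    (G := fun v => maxPhiV v - ∫ x, phiV v x ∂μ)
    (continuous_maxPhiV.sub continuous_integral_phiV)
    (fun t ht v => by rw [maxPhiV_smul ht, integral_phiV_smul, mul_sub])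
    (fun v hv => sub_pos.2 (integral_phiV_lt_maxPhiV hfull hv))
  have hF (v : Fin k → ℝ) :
      ε * ‖v‖ + ξ ≤ -∫ x, phiV v x ∂μ + Pr (fun p => c p + phiV v p.1) := by
    have hPr : ξ + maxPhiV v ≤ Pr (fun p => c p + phiV v p.1) := by
      rw [← le_sub_iff_add_le']
      refine Finset.sup'_le _ _ fun x _ => ?_
      have := apply_const_le_Pr (hcont.add_phiV_fst v) x ⟨0, hd⟩
      linarith [hξ ⟨(x, fun _ => ⟨0, hd⟩), rfl⟩]
    linarith [hgap v]
  refine ⟨⟨ε, hε, ξ, fun v hv t ht => ?_⟩, ?_⟩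
  · simpa [norm_smul, hv, abs_of_pos ht, mul_comm] using hF (t • v)
  · exact (continuous_integral_phiV.neg.add (continuous_Pr_add_phiV hd hcont)).exists_forall_le
      (tendsto_cocompact_atTop_of_mul_norm_add_le hε hF)
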